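/- arXiv:1512.02563 — 2 statements merged into one kernel-verified Lean document; each statement's English description precedes it below -/
import Mathlib

section
/- If F is an equilibrium force-load on a quantization G_T(L, P) of a framework G(P), then the induced force-load F̂ on G(P) (assigning to each edge of G the stress of F on the corresponding leaf of the resolution graph) is an equilibrium force-load on G(P). The key step is: for any equilibrium force-load on a finite tree (forces along edges summing to zero at each interior vertex, opposite forces on the two orientations of each edge), the sum of the forces at all leaves is zero. -/
open scoped Classical

noncomputable section

abbrev V3 : Type := Fin 3 → ℝ
abbrev Form : Type := V3 → V3 → ℝ

/-- The covector dual to `p` (`dp`). -/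
def dualE (p : V3) : V3 → ℝ := fun x => ∑ i, p i * x i

/-- The wedge product `dp ∧ dq`, as a bilinear form on ℝ³. -/
def wedgeE (p q : V3) : Form :=
  fun x y => dualE p x * dualE q y - dualE p y * dualE q x

/-- The projective line through the points represented by `p` and `q`, as a subspace of ℝ³. -/
def projLine (p q : V3) : Submodule ℝ V3 := Submodule.span ℝ {p, q}

/-- `F` is a force whose line of force lies in the (2-dimensional) subspace `W`. -/
def AlongSub (F : Form) (W : Submodule ℝ V3) : Prop :=
  ∃ a b : V3, a ∈ W ∧ b ∈ W ∧ F = wedgeE a b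

/-- `Fh` is an equilibrium force-load on the framework `G(P)` in ℝP². -/
def IsEqFW {m : ℕ} (G : SimpleGraph (Fin m)) (P : Fin m → V3)
    (Fh : Fin m → Fin m → Form) : Prop :=
  (∀ i j, Fh i j = -Fh j i) ∧
  (∀ i j, ¬G.Adj i j → Fh i j = 0) ∧
  (∀ i j, G.Adj i j → AlongSub (Fh i j) (projLine (P i) (P j))) ∧
  (∀ i, ∑ j, Fh i j = 0)

/-- Sum of an antisymmetric function over a square of a finset is zero. -/
lemma sum_sum_antisymm {α : Type*} (s : Finset α) (f : α → α → Form)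
    (h : ∀ u v, f u v = - f v u) : ∑ u ∈ s, ∑ v ∈ s, f u v = 0 := by
  have h2 : (∑ u ∈ s, ∑ v ∈ s, f u v) = - (∑ u ∈ s, ∑ v ∈ s, f u v) := by
    conv_lhs => rw [Finset.sum_comm]
    rw [← Finset.sum_neg_distrib]
    refine Finset.sum_congr rfl fun u _ => ?_
    rw [← Finset.sum_neg_distrib]
    exact Finset.sum_congr rfl fun v _ => h v u
  have h3 : (2:ℝ) • (∑ u ∈ s, ∑ v ∈ s, f u v) = 0 := by
    rw [two_smul]; nth_rewrite 2 [h2]; simp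
  exact (smul_eq_zero.mp h3).resolve_left (by norm_num)

/-- If `F` is an equilibrium force-load on a quantization `G_T(L, P)` of a framework `G(P)`
(the resolution graph `GT` projects to `G` via `π`, leaf edges join distinct fibers, carry the
lines of the corresponding edges of `G(P)`, and are unique per edge of `G`), then the induced
force-load `F̂` on `G(P)` is an equilibrium force-load.  The key step is: for any equilibrium
force-load on a finite tree, the sum of the forces at all leaves is zero. -/
theorem stmt18 {m : ℕ} (G : SimpleGraph (Fin m)) (P : Fin m → V3)
    {W : Type} [Fintype W] [DecidableEq W] (GT : SimpleGraph W) (π : W → Fin m)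
    (L : Sym2 W → Submodule ℝ V3)
    (hleafline : ∀ w w', GT.Adj w w' → π w ≠ π w' →
      L s(w, w') = projLine (P (π w)) (P (π w')))
    (hproj : ∀ w w', GT.Adj w w' → π w ≠ π w' → G.Adj (π w) (π w'))
    (hsurj : ∀ i j, G.Adj i j → ∃ w w', GT.Adj w w' ∧ π w = i ∧ π w' = j)
    (hone : ∀ w₁ w₂ w₁' w₂', GT.Adj w₁ w₂ → GT.Adj w₁' w₂' → π w₁ = π w₁' →
      π w₂ = π w₂' → π w₁ ≠ π w₂ → w₁ = w₁' ∧ w₂ = w₂')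
    (F : W → W → Form)
    (hanti : ∀ u v, F u v = -F v u)
    (hzero : ∀ u v, ¬GT.Adj u v → F u v = 0)
    (halong : ∀ u v, GT.Adj u v → AlongSub (F u v) (L s(u, v)))
    (heq : ∀ w, ∑ u, F w u = 0) :
    IsEqFW G P (fun i j => ∑ w : W, ∑ w' : W,
      if π w = i ∧ π w' = j ∧ π w ≠ π w' then F w w' else 0) ∧
    (∀ (V : Type) [Fintype V] [DecidableEq V] (T : SimpleGraph V) [DecidableRel T.Adj],
      T.IsTree → ∀ Φ : V → V → Form,
        (∀ u v, Φ u v = -Φ v u) → (∀ u v, ¬T.Adj u v → Φ u v = 0) →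
        (∀ v, T.degree v ≠ 1 → ∑ u, Φ v u = 0) →
        ∑ v ∈ Finset.univ.filter (fun v => T.degree v = 1), (∑ u, Φ u v) = 0) := by
  constructor
  · refine ⟨?_, ?_, ?_, ?_⟩
    · -- antisymmetry
      intro i j
      beta_reduce
      rw [eq_neg_iff_add_eq_zero]
      rw [show (∑ w : W, ∑ w' : W, if π w = j ∧ π w' = i ∧ π w ≠ π w' then F w w' else 0)
          = ∑ w : W, ∑ w' : W, if π w' = j ∧ π w = i ∧ π w' ≠ π w then F w' w else 0
          from Finset.sum_comm]
      rw [← Finset.sum_add_distrib]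
      refine Finset.sum_eq_zero fun w _ => ?_
      rw [← Finset.sum_add_distrib]
      refine Finset.sum_eq_zero fun w' _ => ?_
      by_cases h : π w = i ∧ π w' = j ∧ π w ≠ π w'
      · rw [if_pos h, if_pos ⟨h.2.1, h.1, h.2.2.symm⟩, hanti w w']
        abel
      · rw [if_neg h, if_neg (fun h' => h ⟨h'.2.1, h'.1, h'.2.2.symm⟩)]
        simp
    · -- zero on non-edges
      intro i j hij
      beta_reduce
      refine Finset.sum_eq_zero fun w _ => Finset.sum_eq_zero fun w' _ => ?_
      by_cases h : π w = i ∧ π w' = j ∧ π w ≠ π w'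
      · rw [if_pos h]
        by_cases hA : GT.Adj w w'
        · exact absurd (h.1 ▸ h.2.1 ▸ hproj w w' hA h.2.2) hij
        · exact hzero w w' hA
      · exact if_neg h
    · -- along the line
      intro i j hij
      beta_reduce
      obtain ⟨w, w', hadj, hw, hw'⟩ := hsurj i j hij
      have hne : π w ≠ π w' := by rw [hw, hw']; exact hij.ne
      have key : (∑ w₁ : W, ∑ w₂ : W,
          if π w₁ = i ∧ π w₂ = j ∧ π w₁ ≠ π w₂ then F w₁ w₂ else 0) = F w w' := by
        rw [Finset.sum_eq_single w]
        · rw [Finset.sum_eq_single w']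
          · rw [if_pos ⟨hw, hw', hne⟩]
          · intro b _ hb
            by_cases h : π w = i ∧ π b = j ∧ π w ≠ π b
            · by_cases hA : GT.Adj w b
              · exact absurd ((hone w b w w' hA hadj rfl (h.2.1.trans hw'.symm) h.2.2).2) hb
              · rw [if_pos h]; exact hzero w b hA
            · exact if_neg h
          · simp
        · intro a _ ha
          refine Finset.sum_eq_zero fun b _ => ?_
          by_cases h : π a = i ∧ π b = j ∧ π a ≠ π b
          · by_cases hA : GT.Adj a b
            · exact absurd ((hone a b w w' hA hadj (h.1.trans hw.symm)
                (h.2.1.trans hw'.symm) h.2.2).1) ha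
            · rw [if_pos h]; exact hzero a b hA
          · exact if_neg h
        · simp
      rw [key]
      have := halong w w' hadj
      rwa [hleafline w w' hadj hne, hw, hw'] at this
    · -- equilibrium at vertices
      intro i
      beta_reduce
      have step1 : (∑ j, ∑ w : W, ∑ w' : W,
          if π w = i ∧ π w' = j ∧ π w ≠ π w' then F w w' else 0)
          = ∑ w : W, ∑ w' : W, if π w = i ∧ π w ≠ π w' then F w w' else 0 := by
        rw [Finset.sum_comm]
        refine Finset.sum_congr rfl fun w _ => ?_
        rw [Finset.sum_comm]
        refine Finset.sum_congr rfl fun w' _ => ?_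
        by_cases h : π w = i ∧ π w ≠ π w'
        · rw [if_pos h, Finset.sum_eq_single (π w')]
          · rw [if_pos ⟨h.1, rfl, h.2⟩]
          · intro b _ hb; exact if_neg (fun h' => hb h'.2.1.symm)
          · simp
        · rw [if_neg h]
          exact Finset.sum_eq_zero fun j _ => if_neg (fun h' => h ⟨h'.1, h'.2.2⟩)
      rw [step1]
      have step2 : ∀ w : W, (∑ w' : W, if π w = i ∧ π w ≠ π w' then F w w' else 0)
          = (if π w = i then - ∑ w' ∈ Finset.univ.filter (fun w' => π w' = i), F w w'
             else 0) := by
        intro w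
        by_cases hwi : π w = i
        · rw [if_pos hwi]
          have : (∑ w' : W, if π w = i ∧ π w ≠ π w' then F w w' else 0)
              = (∑ w' : W, F w w')
                - ∑ w' : W, if π w' = i then F w w' else 0 := by
            rw [← Finset.sum_sub_distrib]
            refine Finset.sum_congr rfl fun w' _ => ?_
            by_cases h : π w' = i
            · rw [if_pos h, if_neg (fun h' => h'.2 (hwi.trans h.symm))]; simp
            · rw [if_neg h, if_pos ⟨hwi, fun h' => h (h' ▸ hwi)⟩]; simp
          rw [this, heq w, Finset.sum_filter]
          simp
        · rw [if_neg hwi]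
          exact Finset.sum_eq_zero fun w' _ => if_neg (fun h => hwi h.1)
      calc (∑ w : W, ∑ w' : W, if π w = i ∧ π w ≠ π w' then F w w' else 0)
          = ∑ w : W, (if π w = i then
              - ∑ w' ∈ Finset.univ.filter (fun w' => π w' = i), F w w' else 0) :=
            Finset.sum_congr rfl fun w _ => step2 w
        _ = ∑ w ∈ Finset.univ.filter (fun w => π w = i),
              - ∑ w' ∈ Finset.univ.filter (fun w' => π w' = i), F w w' := by
            rw [Finset.sum_filter]
        _ = - ∑ w ∈ Finset.univ.filter (fun w => π w = i),
              ∑ w' ∈ Finset.univ.filter (fun w' => π w' = i), F w w' := by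
            rw [Finset.sum_neg_distrib]
        _ = 0 := by
            rw [sum_sum_antisymm _ _ hanti]; simp
  · -- the tree lemma
    intro V _ _ T _ _ Φ hanti' hzero' heq'
    have h1 : ∀ v, (∑ u, Φ u v) = - ∑ u, Φ v u := by
      intro v
      rw [← Finset.sum_neg_distrib]
      exact Finset.sum_congr rfl fun u _ => hanti' u v
    have total : ∑ v, ∑ u, Φ v u = 0 := sum_sum_antisymm _ _ hanti'
    have hsplit := Finset.sum_filter_add_sum_filter_not Finset.univ
      (fun v => T.degree v = 1) (fun v => ∑ u, Φ v u)
    have hnot : ∑ v ∈ Finset.univ.filter (fun v => ¬ T.degree v = 1), ∑ u, Φ v u = 0 :=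
      Finset.sum_eq_zero fun v hv => heq' v (Finset.mem_filter.mp hv).2
    have hleaf : ∑ v ∈ Finset.univ.filter (fun v => T.degree v = 1), ∑ u, Φ v u = 0 := by
      rw [total] at hsplit
      rw [hnot] at hsplit
      simpa using hsplit
    calc ∑ v ∈ Finset.univ.filter (fun v => T.degree v = 1), (∑ u, Φ u v)
        = ∑ v ∈ Finset.univ.filter (fun v => T.degree v = 1), - ∑ u, Φ v u :=
          Finset.sum_congr rfl fun v _ => h1 v
      _ = - ∑ v ∈ Finset.univ.filter (fun v => T.degree v = 1), ∑ u, Φ v u :=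
          Finset.sum_neg_distrib _
      _ = 0 := by rw [hleaf]; simp
end
end

section
/- Let G be a connected graph all of whose vertices have degree ≥ 3, with exactly m vertices of degree > 3, and suppose G has k vertices of degree 3 spanning a connected subgraph G₀. If k + 2 > m, then G contains a simple cycle with at most one vertex of degree > 3. -/
open scoped Classical

noncomputable section

/-- The subgraph of `G` on degree-3 vertices. -/
def deg3Graph {V : Type} [Fintype V] (G : SimpleGraph V) [DecidableRel G.Adj] :
    SimpleGraph V where
  Adj u v := G.Adj u v ∧ G.degree u = 3 ∧ G.degree v = 3
  symm := ⟨fun u v ⟨h, hu, hv⟩ => ⟨h.symm, hv, hu⟩⟩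
  loopless := ⟨fun v h => G.loopless.irrefl v h.1⟩

lemma deg3_walk_deg {V : Type} [Fintype V] (G : SimpleGraph V) [DecidableRel G.Adj]
    {a b : V} (w : (deg3Graph G).Walk a b) (ha : G.degree a = 3) : G.degree b = 3 := by
  induction w with
  | nil => exact ha
  | cons h p ih => exact ih h.2.2

lemma deg3_walk_reach {V : Type} [Fintype V] (G : SimpleGraph V) [DecidableRel G.Adj]
    (T : Set V) (hT : ∀ {x y : V}, x ∈ T → (deg3Graph G).Adj x y → y ∈ T)
    {a b : V} (w : (deg3Graph G).Walk a b) (ha : a ∈ T) (hb : b ∈ T) :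
    (G.induce T).Reachable ⟨a, ha⟩ ⟨b, hb⟩ := by
  induction w with
  | nil => exact SimpleGraph.Reachable.refl _
  | @cons u c d h p ih =>
      have hc : c ∈ T := hT ha h
      have hadj : (G.induce T).Adj ⟨u, ha⟩ ⟨c, hc⟩ := h.1
      exact hadj.reachable.trans (ih hc hb)

lemma induce_degree {V : Type} [Fintype V] [DecidableEq V] (G : SimpleGraph V)
    [DecidableRel G.Adj] (Tfin : Finset V) (x : ↥((Tfin : Set V))) :
    (G.induce (Tfin : Set V)).degree x = (G.neighborFinset ↑x ∩ Tfin).card := by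
  rw [← SimpleGraph.card_neighborFinset_eq_degree]
  refine Finset.card_bij (fun a _ => (a : V)) ?_ ?_ ?_
  · intro a ha
    rw [SimpleGraph.mem_neighborFinset] at ha
    rw [Finset.mem_inter, SimpleGraph.mem_neighborFinset]
    exact ⟨ha, a.2⟩
  · intro a _ b _ hab
    exact Subtype.ext hab
  · intro b hb
    rw [Finset.mem_inter, SimpleGraph.mem_neighborFinset] at hb
    exact ⟨⟨b, hb.2⟩, by rw [SimpleGraph.mem_neighborFinset]; exact hb.1, rfl⟩

/-- Let `G` be a finite connected graph with all degrees ≥ 3, exactly `m` vertices of degree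
`> 3`, and a set `S` of `k` vertices of degree 3 spanning a connected induced subgraph.
If `k + 2 > m`, then `G` contains a simple cycle with at most one vertex of degree `> 3`. -/
theorem stmt19 {V : Type} [Fintype V] [DecidableEq V] (G : SimpleGraph V)
    [DecidableRel G.Adj]
    (hconn : G.Connected) (hdeg : ∀ v, 3 ≤ G.degree v)
    (m k : ℕ)
    (hm : (Finset.univ.filter fun v => 3 < G.degree v).card = m)
    (S : Finset V) (hk : S.card = k)
    (hS3 : ∀ v ∈ S, G.degree v = 3)
    (hSconn : (G.induce (S : Set V)).Connected)
    (hkm : m < k + 2) :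
    ∃ (v : V) (c : G.Walk v v), c.IsCycle ∧
      (c.support.toFinset.filter fun u => 3 < G.degree u).card ≤ 1 := by
  classical
  rcases S.eq_empty_or_nonempty with hSe | ⟨u0, hu0⟩
  · -- S is empty, so m ≤ 1 and any cycle works
    have hk0 : k = 0 := by rw [← hk, hSe]; simp
    have hm1 : m ≤ 1 := by omega
    have hnotree : ¬ G.IsAcyclic := by
      intro hac
      have htree : G.IsTree := ⟨hconn, hac⟩
      have hcard := htree.card_edgeFinset
      have hsum := G.sum_degrees_eq_twice_card_edges
      have h3 : 3 * Fintype.card V ≤ ∑ v, G.degree v := by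
        calc 3 * Fintype.card V = ∑ _v : V, 3 := by
              simp [Finset.sum_const, Finset.card_univ, mul_comm]
          _ ≤ ∑ v, G.degree v := Finset.sum_le_sum fun v _ => hdeg v
      have hn : 1 ≤ Fintype.card V := Fintype.card_pos_iff.mpr hconn.nonempty
      omega
    have hex : ∃ (v : V) (c : G.Walk v v), c.IsCycle := by
      by_contra h
      push_neg at h
      exact hnotree fun v c => h v c
    obtain ⟨v, c, hc⟩ := hex
    refine ⟨v, c, hc, ?_⟩
    calc (c.support.toFinset.filter fun u => 3 < G.degree u).card
        ≤ (Finset.univ.filter fun v => 3 < G.degree v).card :=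
          Finset.card_le_card (by
            intro u hu
            rw [Finset.mem_filter] at hu ⊢
            exact ⟨Finset.mem_univ u, hu.2⟩)
      _ = m := hm
      _ ≤ 1 := hm1
  · -- main case: S nonempty
    set G3 := deg3Graph G with hG3def
    set Tfin : Finset V := Finset.univ.filter (fun v => G3.Reachable u0 v) with hTfin
    have hmemT : ∀ {v : V}, v ∈ Tfin ↔ G3.Reachable u0 v := by
      intro v; simp [hTfin]
    have hu0T : u0 ∈ Tfin := hmemT.mpr (SimpleGraph.Reachable.refl u0)
    have hdegT : ∀ v ∈ Tfin, G.degree v = 3 := by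
      intro v hv
      obtain ⟨w⟩ := hmemT.mp hv
      exact deg3_walk_deg G w (hS3 u0 hu0)
    have hclosed : ∀ {x y : V}, x ∈ Tfin → G3.Adj x y → y ∈ Tfin := by
      intro x y hx hxy
      exact hmemT.mpr ((hmemT.mp hx).trans hxy.reachable)
    -- S ⊆ Tfin
    have hST : S ⊆ Tfin := by
      intro s hs
      let f : G.induce (S : Set V) →g G3 :=
        ⟨Subtype.val, fun {a b} hab =>
          ⟨hab, hS3 _ (Finset.mem_coe.mp a.2), hS3 _ (Finset.mem_coe.mp b.2)⟩⟩
      exact hmemT.mpr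
        ((hSconn.preconnected ⟨u0, Finset.mem_coe.mpr hu0⟩ ⟨s, Finset.mem_coe.mpr hs⟩).map f)
    set H := G.induce (Tfin : Set V) with hHdef
    have hreachH : ∀ (x : ↥(Tfin : Set V)),
        H.Reachable ⟨u0, Finset.mem_coe.mpr hu0T⟩ x := by
      intro x
      have hx : (x : V) ∈ Tfin := Finset.mem_coe.mp x.2
      obtain ⟨w⟩ := hmemT.mp hx
      exact deg3_walk_reach G (Tfin : Set V)
        (fun {p q} hp hpq => Finset.mem_coe.mpr (hclosed (Finset.mem_coe.mp hp) hpq))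
        w (Finset.mem_coe.mpr hu0T) x.2
    have hHconn : H.Connected := by
      haveI : Nonempty ↥(Tfin : Set V) := ⟨⟨u0, Finset.mem_coe.mpr hu0T⟩⟩
      exact ⟨fun x y => (hreachH x).symm.trans (hreachH y)⟩
    let fH : H →g G := SimpleGraph.Hom.comap _ G
    have hfH : ∀ x : ↥(Tfin : Set V), fH x = (x : V) := fun _ => rfl
    have hfHinj : Function.Injective fH := Subtype.val_injective
    by_cases hac : H.IsAcyclic
    · -- H is a tree; do the counting argument
      have htree : H.IsTree := ⟨hHconn, hac⟩
      set t := Tfin.card with ht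
      have hcardV : Fintype.card ↥(Tfin : Set V) = t := by
        rw [ht]
        exact Fintype.card_coe Tfin
      have hedge := htree.card_edgeFinset
      rw [hcardV] at hedge
      have hsumH := SimpleGraph.sum_degrees_eq_twice_card_edges H
      have hsum1 : ∑ v ∈ Tfin, (G.neighborFinset v ∩ Tfin).card
          = ∑ x : ↥(Tfin : Set V), H.degree x := by
        rw [← Finset.sum_finset_coe (fun v => (G.neighborFinset v ∩ Tfin).card) Tfin]
        exact Finset.sum_congr rfl fun x _ => (induce_degree G Tfin x).symm
      have hdegsplit : ∀ v ∈ Tfin,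
          (G.neighborFinset v ∩ Tfin).card + (G.neighborFinset v \ Tfin).card = 3 := by
        intro v hv
        rw [Finset.card_inter_add_card_sdiff, SimpleGraph.card_neighborFinset_eq_degree]
        exact hdegT v hv
      have hsumsplit : ∑ v ∈ Tfin, ((G.neighborFinset v ∩ Tfin).card
          + (G.neighborFinset v \ Tfin).card) = 3 * t := by
        rw [Finset.sum_congr rfl hdegsplit, Finset.sum_const, smul_eq_mul, mul_comm]
      rw [Finset.sum_add_distrib] at hsumsplit
      have h1t : 1 ≤ t := Finset.card_pos.mpr ⟨u0, hu0T⟩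
      have hB : ∑ v ∈ Tfin, (G.neighborFinset v \ Tfin).card = t + 2 := by
        rw [hsum1, hsumH] at hsumsplit
        omega
      set Mfin := Finset.univ.filter (fun w => 3 < G.degree w) with hMdef
      have hOut : ∀ v ∈ Tfin, G.neighborFinset v \ Tfin
          = Mfin.filter (fun w => G.Adj v w) := by
        intro v hv
        ext w
        simp only [Finset.mem_sdiff, SimpleGraph.mem_neighborFinset, Finset.mem_filter,
          Finset.mem_univ, true_and, hMdef]
        constructor
        · rintro ⟨hadj, hwT⟩
          refine ⟨?_, hadj⟩
          rcases lt_or_eq_of_le (hdeg w) with h | h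
          · exact h
          · exact absurd (hclosed hv ⟨hadj, hdegT v hv, h.symm⟩) hwT
        · rintro ⟨hgt, hadj⟩
          refine ⟨hadj, fun hwT => ?_⟩
          have := hdegT w hwT
          omega
      have hswap : ∑ w ∈ Mfin, (Tfin.filter (fun v => G.Adj v w)).card = t + 2 := by
        rw [← hB,
          show (∑ v ∈ Tfin, (G.neighborFinset v \ Tfin).card)
              = ∑ v ∈ Tfin, (Mfin.filter (fun w => G.Adj v w)).card from
            Finset.sum_congr rfl (fun v hv => by rw [hOut v hv])]
        simp only [Finset.card_filter]
        exact (Finset.sum_comm).symm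
      have hkt : k ≤ t := by rw [← hk, ht]; exact Finset.card_le_card hST
      have hMcard : Mfin.card = m := hm
      have hpig : ∃ w ∈ Mfin, 2 ≤ (Tfin.filter (fun v => G.Adj v w)).card := by
        by_contra hno
        push_neg at hno
        have hle : ∑ w ∈ Mfin, (Tfin.filter (fun v => G.Adj v w)).card
            ≤ ∑ _w ∈ Mfin, 1 :=
          Finset.sum_le_sum fun w hw => by have := hno w hw; omega
        rw [Finset.sum_const, smul_eq_mul, mul_one] at hle
        omega
      obtain ⟨w, hwM, h2⟩ := hpig
      obtain ⟨a, haf, b, hbf, hab⟩ :=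
        Finset.one_lt_card.mp (lt_of_lt_of_le one_lt_two h2)
      rw [Finset.mem_filter] at haf hbf
      obtain ⟨haT, haw⟩ := haf
      obtain ⟨hbT, hbw⟩ := hbf
      have hwdeg : 3 < G.degree w := by
        have := Finset.mem_filter.mp hwM
        exact this.2
      have hwT : w ∉ Tfin := fun h => by have := hdegT w h; omega
      obtain ⟨q0⟩ := hHconn.preconnected ⟨a, Finset.mem_coe.mpr haT⟩ ⟨b, Finset.mem_coe.mpr hbT⟩
      let qw : H.Walk ⟨a, Finset.mem_coe.mpr haT⟩ ⟨b, Finset.mem_coe.mpr hbT⟩ := q0.toPath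
      let p : G.Walk a b := qw.map fH
      have hp : p.IsPath :=
        SimpleGraph.Walk.map_isPath_of_injective hfHinj q0.toPath.2
      have hpsupp : ∀ u ∈ p.support, u ∈ Tfin := by
        intro u hu
        rw [show p.support = qw.support.map fH from SimpleGraph.Walk.support_map fH qw] at hu
        obtain ⟨⟨x, hx⟩, _, rfl⟩ := List.mem_map.mp hu
        exact Finset.mem_coe.mp hx
      have hwa : G.Adj w a := haw.symm
      let P : G.Walk a w := p.concat hbw
      have hPsupp : P.support = p.support ++ [w] := by
        rw [SimpleGraph.Walk.support_concat]
      have hPpath : P.IsPath := by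
        rw [SimpleGraph.Walk.isPath_def, hPsupp, List.nodup_append]
        refine ⟨hp.2, List.nodup_singleton w, ?_⟩
        intro u hu x hu' hux
        rw [List.mem_singleton] at hu'
        subst hu'
        exact hwT (hux ▸ hpsupp u hu)
      have hePnot : s(w, a) ∉ P.edges := by
        intro hmem
        rw [SimpleGraph.Walk.edges_concat, List.concat_eq_append, List.mem_append] at hmem
        rcases hmem with hmem | hmem
        · exact hwT (hpsupp w (p.fst_mem_support_of_mem_edges hmem))
        · rw [List.mem_singleton, Sym2.eq_iff] at hmem
          rcases hmem with ⟨h1, h2⟩ | ⟨h1, h2⟩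
          · exact hwT (h1 ▸ hbT)
          · exact hab h2
      have hcyc : (SimpleGraph.Walk.cons hwa P).IsCycle :=
        (SimpleGraph.Walk.cons_isCycle_iff P hwa).mpr ⟨hPpath, hePnot⟩
      refine ⟨w, SimpleGraph.Walk.cons hwa P, hcyc, ?_⟩
      have hsub : ((SimpleGraph.Walk.cons hwa P).support.toFinset.filter
          (fun u => 3 < G.degree u)) ⊆ {w} := by
        intro u hu
        rw [Finset.mem_filter, List.mem_toFinset, SimpleGraph.Walk.support_cons] at hu
        obtain ⟨hu1, hu2⟩ := hu
        rw [Finset.mem_singleton]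
        rcases List.mem_cons.mp hu1 with h | h
        · exact h
        · rw [hPsupp, List.mem_append] at h
          rcases h with h | h
          · exfalso
            have := hdegT u (hpsupp u h)
            omega
          · exact List.mem_singleton.mp h
      calc ((SimpleGraph.Walk.cons hwa P).support.toFinset.filter
          (fun u => 3 < G.degree u)).card
          ≤ ({w} : Finset V).card := Finset.card_le_card hsub
        _ = 1 := Finset.card_singleton w
    · -- H has a cycle; map it into G
      have hex : ∃ (v : ↥(Tfin : Set V)) (c : H.Walk v v), c.IsCycle := by
        by_contra h
        push_neg at h
        exact hac fun v c => h v c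
      obtain ⟨v, c, hc⟩ := hex
      refine ⟨(v : V), c.map fH, (SimpleGraph.Walk.map_isCycle_iff_of_injective hfHinj).mpr hc, ?_⟩
      have hempty : ((c.map fH).support.toFinset.filter fun u => 3 < G.degree u) = ∅ := by
        apply Finset.eq_empty_of_forall_notMem
        intro u hu
        rw [Finset.mem_filter, List.mem_toFinset, SimpleGraph.Walk.support_map] at hu
        obtain ⟨⟨x, hx⟩, _, rfl⟩ := List.mem_map.mp hu.1
        have h3 : G.degree (fH ⟨x, hx⟩) = 3 := hdegT x (Finset.mem_coe.mp hx)
        omega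
      exact (Finset.card_eq_zero.mpr hempty).trans_le zero_le_one
end
end
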